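/- Let Ṽ be the normalised African cichlid operator, defined for (x₁,x₂,x₃,u) with α := x₁+x₂+x₃ > 0 by Ṽ(x₁,x₂,x₃,u) = ( (2x₁+x₂+x₃)/(4α), (x₂+x₃)/(4α), (x₂+x₃)/(4α), (2x₁+x₂+x₃)/(4α) ); the set S^{3,1} is invariant under Ṽ. Then for every initial point s ∈ S^{3,1}, the sequence Ṽ^k(s) converges to (1/2, 0, 0, 1/2) as k → ∞. -/
import Mathlib


/-- The normalised African cichlid gonosomal operator. -/
noncomputable def nCichlidOp (p : ℝ × ℝ × ℝ × ℝ) : ℝ × ℝ × ℝ × ℝ :=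
  ((2 * p.1 + p.2.1 + p.2.2.1) / (4 * (p.1 + p.2.1 + p.2.2.1)),
   (p.2.1 + p.2.2.1) / (4 * (p.1 + p.2.1 + p.2.2.1)),
   (p.2.1 + p.2.2.1) / (4 * (p.1 + p.2.1 + p.2.2.1)),
   (2 * p.1 + p.2.1 + p.2.2.1) / (4 * (p.1 + p.2.1 + p.2.2.1)))

/-- The set `S^{3,1}` of frequency distributions. -/
def S31 : Set (ℝ × ℝ × ℝ × ℝ) :=
  {p | 0 ≤ p.1 ∧ 0 ≤ p.2.1 ∧ 0 ≤ p.2.2.1 ∧ 0 ≤ p.2.2.2 ∧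
       0 < p.1 + p.2.1 + p.2.2.1 ∧ 0 < p.2.2.2 ∧
       p.1 + p.2.1 + p.2.2.1 + p.2.2.2 = 1}

theorem nCichlidOp_limit (s : ℝ × ℝ × ℝ × ℝ) (hs : s ∈ S31) :
    Filter.Tendsto (fun k => nCichlidOp^[k] s) Filter.atTop
      (nhds ((1 : ℝ) / 2, (0 : ℝ), (0 : ℝ), (1 : ℝ) / 2)) := by
  obtain ⟨h1, h2, h3, h4, hα, hu, hsum⟩ := hs
  set b : ℝ := (s.2.1 + s.2.2.1) / (4 * (s.1 + s.2.1 + s.2.2.1)) with hbdef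
  have hb0 : 0 ≤ b := div_nonneg (by linarith) (by linarith)
  set c : ℕ → ℝ := fun k => b / (1 + 2 * k * b) with hcdef
  have hden : ∀ k : ℕ, (0:ℝ) < 1 + 2 * k * b := fun k => by positivity
  have hc0 : ∀ k, 0 ≤ c k := fun k => div_nonneg hb0 (hden k).le
  have key : ∀ k : ℕ, nCichlidOp^[k+1] s = (1/2 - c k, c k, c k, 1/2 - c k) := by
    intro k
    induction k with
    | zero =>
      have hα' : s.1 + s.2.1 + s.2.2.1 ≠ 0 := ne_of_gt hα
      have hc00 : c 0 = b := by simp [hcdef]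
      rw [Function.iterate_one, hc00]
      simp only [nCichlidOp, hbdef, Prod.mk.injEq]
      refine ⟨?_, trivial, trivial, ?_⟩ <;> · field_simp; ring
    | succ k ih =>
      rw [Function.iterate_succ_apply', ih]
      have hd := hden k
      have hd' := hden (k+1)
      have hck := hc0 k
      have hh : (0:ℝ) < 1/2 + c k := by linarith
      simp only [nCichlidOp]
      have e1 : (1/2 - c k + c k + c k) = 1/2 + c k := by ring
      rw [e1]
      have hck_eq : c k = b / (1 + 2 * k * b) := rfl
      have hck1_eq : c (k+1) = b / (1 + 2 * (k+1 : ℕ) * b) := rfl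
      have hne : (1 + 2*(k:ℝ)*b) ≠ 0 := hd.ne'
      have hne' : (1 + 2*((k:ℝ)+1)*b) ≠ 0 := by push_cast at hd'; exact hd'.ne'
      have hne2 : (1/2 + c k) ≠ 0 := hh.ne'
      refine Prod.ext ?_ (Prod.ext ?_ (Prod.ext ?_ ?_)) <;>
        simp only [hck_eq, hck1_eq] <;> push_cast <;>
        field_simp <;> ring
  have hct : Filter.Tendsto c Filter.atTop (nhds 0) := by
    rcases eq_or_lt_of_le hb0 with hb | hb
    · have : c = fun _ => 0 := by
        funext k; simp [hcdef, ← hb]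
      rw [this]; exact tendsto_const_nhds
    · apply Filter.Tendsto.div_atTop tendsto_const_nhds
      apply Filter.tendsto_atTop_add_const_left
      have h1 : Filter.Tendsto (fun k : ℕ => 2 * (k:ℝ)) Filter.atTop Filter.atTop :=
        (tendsto_natCast_atTop_atTop).const_mul_atTop two_pos
      exact h1.atTop_mul_const hb
  rw [← Filter.tendsto_add_atTop_iff_nat 1]
  simp only [key]
  have hhalf : Filter.Tendsto (fun k => 1/2 - c k) Filter.atTop (nhds (1/2 : ℝ)) := by
    simpa using hct.const_sub (1/2 : ℝ)
  exact hhalf.prodMk_nhds (hct.prodMk_nhds (hct.prodMk_nhds hhalf))
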